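/- For sets A, B ⊆ ℕ, the sets A and B are separable by some rotation if and only if the difference set A − B = {a − b : a ∈ A, b ∈ B} is not a set of Bohr recurrence. -/

import Mathlib

/-- Two sets `A, B ⊆ ℕ` are separable by some rotation if there are `d ∈ ℕ` and
`α ∈ (ℝ/ℤ)^d` such that the closures of `Aα` and `Bα` in `(ℝ/ℤ)^d` are disjoint. -/
def SeparableByRotation (A B : Set ℕ) : Prop :=
  ∃ (d : ℕ) (α : Fin d → AddCircle (1 : ℝ)),
    Disjoint (closure ((fun a : ℕ => a • α) '' A)) (closure ((fun b : ℕ => b • α) '' B))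

/-- A set `R ⊆ ℤ` is a set of Bohr recurrence if for every `d`, every `α ∈ ℝ^d`
and every `ε > 0`, there is `r ∈ R` such that every coordinate of `rα` is within
`ε` of an integer. -/
def BohrRecurrenceZ (R : Set ℤ) : Prop :=
  ∀ (d : ℕ) (α : Fin d → ℝ) (ε : ℝ), 0 < ε →
    ∃ r ∈ R, ∀ i : Fin d, ∃ k : ℤ, |(r : ℝ) * α i - (k : ℝ)| < ε

/-!
In the torus `(ℝ/ℤ)^d` with the sup norm, two sets have disjoint closures exactly when they
are a positive distance apart, by compactness. Since `dist (a • α) (b • α) = ‖(a - b) • α‖`,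
separating `A` from `B` by `α` means that `‖r • α‖` is bounded below on `A - B`, while `A - B`
is a set of Bohr recurrence exactly when `inf_{r ∈ A - B} ‖r • α‖ = 0` for every `α`, the norm
of `x : ℝ/ℤ` being the distance from a lift of `x` to the nearest integer.
-/

open Metric

section DisjointClosure

variable {X : Type*} [PseudoMetricSpace X] {S T : Set X}

lemma exists_pos_le_dist_of_disjoint_closure [CompactSpace X]
    (h : Disjoint (closure S) (closure T)) : ∃ δ > 0, ∀ s ∈ S, ∀ t ∈ T, δ ≤ dist s t := by
  obtain ⟨δ, hδ, hthick⟩ := h.exists_thickenings isClosed_closure.isCompact isClosed_closure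
  refine ⟨δ, hδ, fun s hs t ht => not_lt.mp fun hst => Set.disjoint_left.mp hthick ?_
    (self_subset_thickening hδ _ (subset_closure ht))⟩
  exact mem_thickening_iff.mpr ⟨s, subset_closure hs, by rwa [dist_comm]⟩

lemma disjoint_closure_of_pos_le_dist {δ : ℝ} (hδ : 0 < δ)
    (h : ∀ s ∈ S, ∀ t ∈ T, δ ≤ dist s t) : Disjoint (closure S) (closure T) := by
  refine Set.disjoint_left.mpr fun x hxS hxT => ?_
  obtain ⟨s, hs, hxs⟩ := mem_closure_iff.mp hxS (δ / 2) (half_pos hδ)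
  obtain ⟨t, ht, hxt⟩ := mem_closure_iff.mp hxT (δ / 2) (half_pos hδ)
  have : dist s t < δ := calc
    dist s t ≤ dist x s + dist x t := dist_triangle_left s t x
    _ < δ / 2 + δ / 2 := add_lt_add hxs hxt
    _ = δ := add_halves δ
  exact (h s hs t ht).not_gt this

lemma disjoint_closure_iff_exists_pos_le_dist [CompactSpace X] :
    Disjoint (closure S) (closure T) ↔ ∃ δ > 0, ∀ s ∈ S, ∀ t ∈ T, δ ≤ dist s t :=
  ⟨exists_pos_le_dist_of_disjoint_closure, fun ⟨_, hδ, h⟩ => disjoint_closure_of_pos_le_dist hδ h⟩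

end DisjointClosure

lemma dist_nsmul_nsmul {G : Type*} [SeminormedAddCommGroup G] (a b : ℕ) (x : G) :
    dist (a • x) (b • x) = ‖((a : ℤ) - b) • x‖ := by
  rw [dist_eq_norm, sub_smul, natCast_zsmul, natCast_zsmul]

lemma AddCircle.norm_coe_one_lt_iff {x ε : ℝ} :
    ‖(x : AddCircle (1 : ℝ))‖ < ε ↔ ∃ k : ℤ, |x - k| < ε := by
  rw [UnitAddCircle.norm_eq]
  exact ⟨fun h => ⟨round x, h⟩, fun ⟨k, hk⟩ => (round_le x k).trans_lt hk⟩

lemma norm_zsmul_coe_lt_iff {ι : Type*} [Fintype ι] (r : ℤ) (β : ι → ℝ) {ε : ℝ}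
    (hε : 0 < ε) :
    ‖r • (fun i => (β i : AddCircle (1 : ℝ)))‖ < ε ↔ ∀ i, ∃ k : ℤ, |r * β i - k| < ε := by
  simp only [pi_norm_lt_iff hε, Pi.smul_apply, ← AddCircle.coe_zsmul, zsmul_eq_mul,
    AddCircle.norm_coe_one_lt_iff]

lemma bohrRecurrenceZ_iff_forall_torus {R : Set ℤ} :
    BohrRecurrenceZ R ↔ ∀ (d : ℕ) (α : Fin d → AddCircle (1 : ℝ)) (ε : ℝ), 0 < ε →
      ∃ r ∈ R, ‖r • α‖ < ε := by
  refine ⟨fun h d α ε hε => ?_, fun h d β ε hε => ?_⟩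
  · choose β hβ using fun i => QuotientAddGroup.mk_surjective (α i)
    obtain ⟨r, hr, hβr⟩ := h d β ε hε
    refine ⟨r, hr, ?_⟩
    rw [← funext hβ]
    exact (norm_zsmul_coe_lt_iff r β hε).mpr hβr
  · obtain ⟨r, hr, hβr⟩ := h d (fun i => β i) ε hε
    exact ⟨r, hr, (norm_zsmul_coe_lt_iff r β hε).mp hβr⟩

theorem separable_iff_difference_not_bohr (A B : Set ℕ) :
    SeparableByRotation A B ↔
      ¬ BohrRecurrenceZ {z : ℤ | ∃ a ∈ A, ∃ b ∈ B, z = (a : ℤ) - (b : ℤ)} := by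
  simp only [SeparableByRotation, disjoint_closure_iff_exists_pos_le_dist,
    bohrRecurrenceZ_iff_forall_torus, Set.forall_mem_image, dist_nsmul_nsmul]
  push Not
  simp only [Set.mem_ofPred_eq, forall_exists_index, and_imp, forall_comm (α := ℤ), forall_eq]
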